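/- arXiv:2502.21199 — 8 statements merged into one kernel-verified Lean document; each statement's English description precedes it below -/
import Mathlib

section
/- Let N ≥ 1, let α, α₀, β be real numbers, and set Z = (1 + exp α)^N + exp(α₀) · (1 + exp(α + β))^N. Then the sum over all (l₀, l₁, …, l_N) ∈ {0,1}^{N+1} of exp(α₀ l₀ + α (l₁ + ⋯ + l_N) + β l₀ (l₁ + ⋯ + l_N)) equals Z; consequently the Dandelion probability function P(l₀,…,l_N) = (1/Z) exp(α₀ l₀ + α Σᵢ lᵢ + β l₀ Σᵢ lᵢ) sums to 1 over {0,1}^{N+1}. -/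
/-- The real value of a Bernoulli (default) indicator. -/
noncomputable def ind (b : Bool) : ℝ := if b then 1 else 0

lemma dandelion_key (N : ℕ) (a : ℝ) :
    (∑ f : Fin N → Bool, Real.exp (a * ∑ i, ind (f i))) = (1 + Real.exp a) ^ N := by
  have h1 : ∀ f : Fin N → Bool,
      Real.exp (a * ∑ i, ind (f i)) = ∏ i, Real.exp (a * ind (f i)) := by
    intro f
    rw [Finset.mul_sum, Real.exp_sum]
  simp_rw [h1]
  rw [← Fintype.piFinset_univ]
  rw [← Finset.prod_univ_sum (fun _ : Fin N => (Finset.univ : Finset Bool))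
    (fun _ b => Real.exp (a * ind b))]
  have h2 : ∀ i : Fin N, (∑ b : Bool, Real.exp (a * ind b)) = 1 + Real.exp a := by
    intro i
    simp [ind, Real.exp_zero, add_comm]
  rw [Finset.prod_congr rfl (fun i _ => h2 i), Finset.prod_const, Finset.card_univ,
    Fintype.card_fin]

/-- The partition function of the Dandelion model: the sum over all configurations
`(l₀, l₁, …, l_N) ∈ {0,1}^{N+1}` of `exp(α₀ l₀ + α Σᵢ lᵢ + β l₀ Σᵢ lᵢ)` equals
`Z = (1 + e^α)^N + e^{α₀} (1 + e^{α+β})^N`; consequently the Dandelion probability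
function `P = (1/Z) exp(⋯)` sums to `1`. -/
theorem dandelion_partition_function (N : ℕ) (hN : 1 ≤ N) (α α₀ β Z : ℝ)
    (hZ : Z = (1 + Real.exp α) ^ N + Real.exp α₀ * (1 + Real.exp (α + β)) ^ N) :
    (∑ l : Fin (N + 1) → Bool,
        Real.exp (α₀ * ind (l 0) + α * (∑ i : Fin N, ind (l i.succ))
          + β * ind (l 0) * (∑ i : Fin N, ind (l i.succ)))) = Z ∧
    (∑ l : Fin (N + 1) → Bool,
        (1 / Z) * Real.exp (α₀ * ind (l 0) + α * (∑ i : Fin N, ind (l i.succ))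
          + β * ind (l 0) * (∑ i : Fin N, ind (l i.succ)))) = 1 := by
  have hZpos : 0 < Z := by
    rw [hZ]
    positivity
  have key : (∑ l : Fin (N + 1) → Bool,
      Real.exp (α₀ * ind (l 0) + α * (∑ i : Fin N, ind (l i.succ))
        + β * ind (l 0) * (∑ i : Fin N, ind (l i.succ)))) = Z := by
    rw [← Equiv.sum_comp (Fin.consEquiv (fun _ => Bool))
      (fun l => Real.exp (α₀ * ind (l 0) + α * (∑ i : Fin N, ind (l i.succ))
        + β * ind (l 0) * (∑ i : Fin N, ind (l i.succ))))]
    rw [Fintype.sum_prod_type]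
    simp only [Fin.consEquiv_apply, Fin.cons_zero, Fin.cons_succ]
    rw [Fintype.sum_bool]
    have hT : ∀ f : Fin N → Bool,
        α₀ * ind true + α * (∑ i, ind (f i)) + β * ind true * (∑ i, ind (f i))
          = α₀ + (α + β) * (∑ i, ind (f i)) := by
      intro f; simp only [ind, if_true]; ring
    have hF : ∀ f : Fin N → Bool,
        α₀ * ind false + α * (∑ i, ind (f i)) + β * ind false * (∑ i, ind (f i))
          = α * (∑ i, ind (f i)) := by
      intro f; simp [ind]
    simp_rw [hT, hF, Real.exp_add, ← Finset.mul_sum]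
    rw [dandelion_key, dandelion_key, hZ]
    ring
  refine ⟨key, ?_⟩
  rw [← Finset.mul_sum, key, one_div, inv_mul_cancel₀ hZpos.ne']
end

section
/- Let N ≥ 1, 0 < p < 1, 0 < q < p with 1 - 2p + q > 0. Define α = log((p-q)/(1-2p+q)), α₀ = (N-1)·log((1-p)/p) + N·α, β = log(q/(p-q)) - α, Z = (1+exp α)^N + exp(α₀)·(1+exp(α+β))^N, and P(l₀,…,l_N) = (1/Z) exp(α₀ l₀ + α Σ_{i=1}^N lᵢ + β l₀ Σ_{i=1}^N lᵢ) on {0,1}^{N+1}. Then the expectation of the central default indicator, E[L₀] = Σ_{(l₀,…,l_N): l₀=1} P(l₀,…,l_N), equals p. -/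
open Finset Real

lemma sum_filter_apply_zero_eq_sum_cons {α M : Type*} [Fintype α] [DecidableEq α]
    [AddCommMonoid M] {n : ℕ} (a : α) (f : (Fin (n + 1) → α) → M) :
    ∑ l ∈ univ.filter (fun l : Fin (n + 1) → α => l 0 = a), f l
      = ∑ g : Fin n → α, f (Fin.cons a g) := by
  rw [Finset.sum_filter, ← (Fin.consEquiv fun _ => α).sum_comp, Fintype.sum_prod_type,
    Fintype.sum_eq_single a]
  · simp [Fin.consEquiv]
  · intro b hb
    simp [Fin.consEquiv, hb]

lemma sum_exp_mul_sum_ind (n : ℕ) (c : ℝ) :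
    ∑ g : Fin n → Bool, exp (c * ∑ i, ind (g i)) = (1 + exp c) ^ n := by
  have hsum_bool : 1 + exp c = ∑ b, exp (c * ind b) := by simp [ind, add_comm]
  simp only [hsum_bool, Fintype.sum_pow, mul_sum, exp_sum]

lemma sum_exp_central_default (n : ℕ) (α₀ α β : ℝ) :
    ∑ l ∈ univ.filter (fun l : Fin (n + 1) → Bool => l 0 = true),
        exp (α₀ * ind (l 0) + α * (∑ i : Fin n, ind (l i.succ))
          + β * ind (l 0) * (∑ i : Fin n, ind (l i.succ)))
      = exp α₀ * (1 + exp (α + β)) ^ n := by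
  have hexp_split : ∀ S : ℝ,
      exp (α₀ * ind true + α * S + β * ind true * S) = exp α₀ * exp ((α + β) * S) := by
    intro S
    rw [← exp_add]
    simp only [ind, if_true]
    ring_nf
  simp only [sum_filter_apply_zero_eq_sum_cons, Fin.cons_zero, Fin.cons_succ, hexp_split,
    ← mul_sum, sum_exp_mul_sum_ind]

lemma exp_natCast_sub_one_mul_log {r : ℝ} (hr : 0 < r) (n : ℕ) :
    exp ((n - 1 : ℝ) * log r) = r ^ n / r := by
  rw [sub_one_mul, exp_sub, exp_nat_mul, exp_log hr]

lemma dandelion_central_odds (n : ℕ) {p q α α₀ β : ℝ} (hq0 : 0 < q) (hqp : q < p)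
    (hpos : 1 - 2 * p + q > 0)
    (hα : α = log ((p - q) / (1 - 2 * p + q)))
    (hα₀ : α₀ = (n - 1 : ℝ) * log ((1 - p) / p) + n * α)
    (hβ : β = log (q / (p - q)) - α) :
    exp α₀ * (1 + exp (α + β)) ^ n = p / (1 - p) * (1 + exp α) ^ n := by
  have hp : 0 < p := hq0.trans hqp
  have hpq : 0 < p - q := sub_pos.2 hqp
  have h1p : 0 < 1 - p := by linarith
  have hd : 1 - 2 * p + q ≠ 0 := hpos.ne'
  have hexpα : exp α = (p - q) / (1 - 2 * p + q) := by rw [hα, exp_log (by positivity)]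
  have hexpαβ : exp (α + β) = q / (p - q) := by
    rw [hβ, add_sub_cancel, exp_log (by positivity)]
  have hone_add_expα : 1 + exp α = (1 - p) / (1 - 2 * p + q) := by
    rw [hexpα, one_add_div hd]; congr 1; ring
  have hone_add_expαβ : 1 + exp (α + β) = p / (p - q) := by
    rw [hexpαβ, one_add_div hpq.ne']; congr 1; ring
  have hfactor : (1 - p) / p * ((p - q) / (1 - 2 * p + q)) * (p / (p - q))
      = (1 - p) / (1 - 2 * p + q) := by field_simp
  rw [hα₀, exp_add, exp_natCast_sub_one_mul_log (by positivity), exp_nat_mul, hone_add_expαβ,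
    hone_add_expα, hexpα, ← hfactor, mul_pow, mul_pow]
  field_simp

theorem dandelion_central_marginal_general (N : ℕ) (p q : ℝ)
    (hq0 : 0 < q) (hqp : q < p)
    (hpos : 1 - 2 * p + q > 0)
    (α α₀ β Z : ℝ)
    (hα : α = Real.log ((p - q) / (1 - 2 * p + q)))
    (hα₀ : α₀ = (N - 1 : ℝ) * Real.log ((1 - p) / p) + N * α)
    (hβ : β = Real.log (q / (p - q)) - α)
    (hZ : Z = (1 + Real.exp α) ^ N + Real.exp α₀ * (1 + Real.exp (α + β)) ^ N) :
    (∑ l ∈ Finset.univ.filter (fun l : Fin (N + 1) → Bool => l 0 = true),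
        (1 / Z) * Real.exp (α₀ * ind (l 0) + α * (∑ i : Fin N, ind (l i.succ))
          + β * ind (l 0) * (∑ i : Fin N, ind (l i.succ)))) = p := by
  have h1p : 0 < 1 - p := by linarith
  have hodds := dandelion_central_odds N hq0 hqp hpos hα hα₀ hβ
  rw [← mul_sum, sum_exp_central_default, hZ, hodds]
  have hpow : 0 < (1 + exp α) ^ N := by positivity
  field_simp
  ring

/-- In the Dandelion model with parameters `α = log((p-q)/(1-2p+q))`,
`α₀ = (N-1)log((1-p)/p) + Nα`, `β = log(q/(p-q)) - α` and partition function
`Z = (1+e^α)^N + e^{α₀}(1+e^{α+β})^N`, the expectation of the central default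
indicator, `E[L₀] = Σ_{l₀=1} P(l₀,…,l_N)`, equals `p`. -/
theorem dandelion_central_marginal (N : ℕ) (hN : 1 ≤ N) (p q : ℝ)
    (hp0 : 0 < p) (hp1 : p < 1) (hq0 : 0 < q) (hqp : q < p)
    (hpos : 1 - 2 * p + q > 0)
    (α α₀ β Z : ℝ)
    (hα : α = Real.log ((p - q) / (1 - 2 * p + q)))
    (hα₀ : α₀ = (N - 1 : ℝ) * Real.log ((1 - p) / p) + N * α)
    (hβ : β = Real.log (q / (p - q)) - α)
    (hZ : Z = (1 + Real.exp α) ^ N + Real.exp α₀ * (1 + Real.exp (α + β)) ^ N) :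
    (∑ l ∈ Finset.univ.filter (fun l : Fin (N + 1) → Bool => l 0 = true),
        (1 / Z) * Real.exp (α₀ * ind (l 0) + α * (∑ i : Fin N, ind (l i.succ))
          + β * ind (l 0) * (∑ i : Fin N, ind (l i.succ)))) = p :=
  dandelion_central_marginal_general N p q hq0 hqp hpos α α₀ β Z hα hα₀ hβ hZ
end

section
/- Let N ≥ 1, 0 < p < 1, 0 < q < p with 1 - 2p + q > 0, and let P be the Dandelion probability function on {0,1}^{N+1} with parameters α = log((p-q)/(1-2p+q)), α₀ = (N-1)·log((1-p)/p) + N·α, β = log(q/(p-q)) - α, Z = (1+exp α)^N + exp(α₀)·(1+exp(α+β))^N. Then for any fixed non-central index i ∈ {1,…,N}, the marginal expectation E[Lᵢ] = Σ_{(l₀,…,l_N): lᵢ=1} P(l₀,…,l_N) equals p. -/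
open Finset

theorem prod_ite_eq_mul_pow {ι M : Type*} [Fintype ι] [DecidableEq ι] [CommMonoid M]
    (i : ι) (a b : M) :
    ∏ j, (if j = i then a else b) = a * b ^ (Fintype.card ι - 1) := by
  rw [Fintype.prod_eq_mul_prod_compl i, if_pos rfl,
    prod_congr rfl fun j hj => if_neg (by simpa using hj), prod_const, card_compl,
    card_singleton]

theorem sum_filter_apply_eq_true_prod {ι R : Type*} [Fintype ι] [DecidableEq ι] [CommSemiring R]
    (f : Bool → R) (i : ι) :
    ∑ g ∈ univ.filter (fun g : ι → Bool => g i = true), ∏ j, f (g j)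
      = f true * (f true + f false) ^ (Fintype.card ι - 1) := by
  have hfilter : univ.filter (fun g : ι → Bool => g i = true)
      = Fintype.piFinset fun j => if j = i then {true} else univ := by
    ext g
    simp only [mem_filter, mem_univ, true_and, Fintype.mem_piFinset]
    constructor
    · intro hg j
      split_ifs with hj <;> simp [hj, hg]
    · intro hg
      simpa using hg i
  rw [hfilter, ← prod_univ_sum, ← prod_ite_eq_mul_pow i]
  refine prod_congr rfl fun j _ => ?_
  split_ifs <;> simp [add_comm]

theorem sum_filter_apply_eq_true_exp_mul_sum_ind {ι : Type*} [Fintype ι] [DecidableEq ι]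
    (i : ι) (u : ℝ) :
    ∑ g ∈ univ.filter (fun g : ι → Bool => g i = true), Real.exp (u * ∑ j, ind (g j))
      = Real.exp u * (Real.exp u + 1) ^ (Fintype.card ι - 1) := by
  simp_rw [mul_sum, Real.exp_sum]
  rw [sum_filter_apply_eq_true_prod (fun b => Real.exp (u * ind b))]
  simp [ind]

theorem sum_filter_succ_eq_true_dandelion_weight (N : ℕ) (α α₀ β : ℝ) (i : Fin N) :
    ∑ l ∈ univ.filter (fun l : Fin (N + 1) → Bool => l i.succ = true),
        Real.exp (α₀ * ind (l 0) + α * (∑ j : Fin N, ind (l j.succ))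
          + β * ind (l 0) * (∑ j : Fin N, ind (l j.succ)))
      = Real.exp α * (Real.exp α + 1) ^ (N - 1)
        + Real.exp α₀ * (Real.exp (α + β) * (Real.exp (α + β) + 1) ^ (N - 1)) := by
  have hsplit : ∀ (b : Bool) (S : ℝ), Real.exp (α₀ * ind b + α * S + β * ind b * S)
      = Real.exp (α₀ * ind b) * Real.exp ((α + β * ind b) * S) := by
    intro b S
    rw [← Real.exp_add]
    ring_nf
  rw [sum_filter, ← (Fin.consEquiv fun _ => Bool).sum_comp, Fintype.sum_prod_type,
    Fintype.sum_bool]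
  simp only [Fin.consEquiv_apply, Fin.cons_zero, Fin.cons_succ, hsplit, ← mul_ite_zero,
    ← mul_sum, ← sum_filter, sum_filter_apply_eq_true_exp_mul_sum_ind, Fintype.card_fin]
  simp [ind, add_comm]

theorem dandelion_leaf_marginal_ratio (p q a b e : ℝ) (M : ℕ)
    (hq0 : 0 < q) (hqp : q < p) (hD : 0 < 1 - 2 * p + q)
    (ha : a = (p - q) / (1 - 2 * p + q)) (hb : b = q / (p - q))
    (he : e = ((1 - p) / p) ^ M * a ^ (M + 1)) :
    (a * (a + 1) ^ M + e * (b * (b + 1) ^ M)) / ((1 + a) ^ (M + 1) + e * (1 + b) ^ (M + 1))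
      = p := by
  have hpq : p - q ≠ 0 := by linarith
  have hp : p ≠ 0 := by linarith
  have hD' : 1 - 2 * p + q ≠ 0 := hD.ne'
  have ha1 : a + 1 = (1 - p) / (1 - 2 * p + q) := by
    rw [ha, div_add_one hD']; ring_nf
  have hb1 : b + 1 = p / (p - q) := by
    rw [hb]; field_simp; ring
  have hab : a * (b + 1) = p / (1 - 2 * p + q) := by
    rw [ha, hb1]; field_simp
  have hsum : (a + 1) + a * (b + 1) = 1 / (1 - 2 * p + q) := by
    rw [ha1, hab]; field_simp; ring
  have hbalance : e * (b + 1) ^ M = a * (a + 1) ^ M := by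
    calc e * (b + 1) ^ M = a * ((1 - p) / p * a * (b + 1)) ^ M := by
          rw [he, mul_pow, mul_pow]; ring
      _ = a * (a + 1) ^ M := by
          rw [ha1, hb1, ha]; field_simp
  have hc : (a + 1) ^ M ≠ 0 := pow_ne_zero M (by rw [ha1]; exact div_ne_zero (by linarith) hD')
  calc (a * (a + 1) ^ M + e * (b * (b + 1) ^ M)) / ((1 + a) ^ (M + 1) + e * (1 + b) ^ (M + 1))
      = a * (b + 1) * (a + 1) ^ M / (((a + 1) + a * (b + 1)) * (a + 1) ^ M) := by
        congr 1
        · linear_combination b * hbalance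
        · linear_combination (b + 1) * hbalance
    _ = p := by
        rw [mul_div_mul_right _ _ hc, hsum, hab, div_div_div_cancel_right₀ hD', div_one]

theorem dandelion_noncentral_marginal_general (N : ℕ) (p q : ℝ)
    (hq0 : 0 < q) (hqp : q < p)
    (hpos : 1 - 2 * p + q > 0)
    (α α₀ β Z : ℝ)
    (hα : α = Real.log ((p - q) / (1 - 2 * p + q)))
    (hα₀ : α₀ = (N - 1 : ℝ) * Real.log ((1 - p) / p) + N * α)
    (hβ : β = Real.log (q / (p - q)) - α)
    (hZ : Z = (1 + Real.exp α) ^ N + Real.exp α₀ * (1 + Real.exp (α + β)) ^ N)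
    (i : Fin N) :
    (∑ l ∈ Finset.univ.filter (fun l : Fin (N + 1) → Bool => l i.succ = true),
        (1 / Z) * Real.exp (α₀ * ind (l 0) + α * (∑ i : Fin N, ind (l i.succ))
          + β * ind (l 0) * (∑ i : Fin N, ind (l i.succ)))) = p := by
  obtain ⟨M, rfl⟩ : ∃ M, N = M + 1 := ⟨N - 1, by have := i.pos; omega⟩
  have hpq : 0 < p - q := by linarith
  have hexpα : Real.exp α = (p - q) / (1 - 2 * p + q) := by
    rw [hα, Real.exp_log (div_pos hpq hpos)]
  have hexpαβ : Real.exp (α + β) = q / (p - q) := by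
    rw [hβ, add_sub_cancel, Real.exp_log (div_pos hq0 hpq)]
  have hexpα₀ : Real.exp α₀ = ((1 - p) / p) ^ M * Real.exp α ^ (M + 1) := by
    rw [hα₀, Nat.cast_add_one, add_sub_cancel_right, ← Nat.cast_add_one, Real.exp_add,
      Real.exp_nat_mul, Real.exp_nat_mul, Real.exp_log (div_pos (by linarith) (by linarith))]
  rw [← mul_sum, sum_filter_succ_eq_true_dandelion_weight, hZ, one_div_mul_eq_div,
    Nat.add_sub_cancel]
  exact dandelion_leaf_marginal_ratio p q _ _ _ M hq0 hqp hpos hexpα hexpαβ hexpα₀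

/-- In the Dandelion model with parameters `α = log((p-q)/(1-2p+q))`,
`α₀ = (N-1)log((1-p)/p) + Nα`, `β = log(q/(p-q)) - α` and partition function
`Z = (1+e^α)^N + e^{α₀}(1+e^{α+β})^N`, for any fixed non-central index `i`, the marginal expectation
`E[Lᵢ] = Σ_{lᵢ=1} P(l₀,…,l_N)` equals `p`. -/
theorem dandelion_noncentral_marginal (N : ℕ) (hN : 1 ≤ N) (p q : ℝ)
    (hp0 : 0 < p) (hp1 : p < 1) (hq0 : 0 < q) (hqp : q < p)
    (hpos : 1 - 2 * p + q > 0)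
    (α α₀ β Z : ℝ)
    (hα : α = Real.log ((p - q) / (1 - 2 * p + q)))
    (hα₀ : α₀ = (N - 1 : ℝ) * Real.log ((1 - p) / p) + N * α)
    (hβ : β = Real.log (q / (p - q)) - α)
    (hZ : Z = (1 + Real.exp α) ^ N + Real.exp α₀ * (1 + Real.exp (α + β)) ^ N)
    (i : Fin N) :
    (∑ l ∈ Finset.univ.filter (fun l : Fin (N + 1) → Bool => l i.succ = true),
        (1 / Z) * Real.exp (α₀ * ind (l 0) + α * (∑ i : Fin N, ind (l i.succ))
          + β * ind (l 0) * (∑ i : Fin N, ind (l i.succ)))) = p :=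
  dandelion_noncentral_marginal_general N p q hq0 hqp hpos α α₀ β Z hα hα₀ hβ hZ i
end

section
/- Let N ≥ 1 and let α, α₀, β, Z be real numbers with Z ≠ 0, and let P(l₀,…,l_N) = (1/Z) exp(α₀ l₀ + α Σ_{i=1}^N lᵢ + β l₀ Σ_{i=1}^N lᵢ) on {0,1}^{N+1}. Then for every l ∈ {0,1,…,N}, the probability that the total loss L = L₁ + ⋯ + L_N equals l, namely Σ over all (l₀,…,l_N) ∈ {0,1}^{N+1} with l₁ + ⋯ + l_N = l of P(l₀,…,l_N), equals (1/Z) · C(N,l) · (exp(α l) + exp(α₀ + l(α+β))), where C(N,l) is the binomial coefficient. -/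
/-- The number of configurations `t : Fin N → Bool` with exactly `l` ones
is the binomial coefficient `C(N, l)`. -/
lemma card_count (N l : ℕ) :
    (Finset.univ.filter (fun t : Fin N → Bool =>
      (∑ i : Fin N, (if t i then 1 else 0 : ℕ)) = l)).card = N.choose l := by
  have h : ∀ t : Fin N → Bool,
      (∑ i : Fin N, (if t i then 1 else 0 : ℕ)) = (Finset.univ.filter (fun i => t i = true)).card := by
    intro t
    rw [Finset.card_filter]
  have hpc : ((Finset.univ : Finset (Fin N)).powersetCard l).card = N.choose l := by
    rw [Finset.card_powersetCard, Finset.card_univ, Fintype.card_fin]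
  rw [← hpc]
  apply Finset.card_bij (fun t _ => Finset.univ.filter (fun i => t i = true))
  · intro t ht
    simp only [Finset.mem_filter, Finset.mem_univ, true_and] at ht
    simp [Finset.mem_powersetCard, ← h t, ht]
  · intro t₁ h₁ t₂ h₂ he
    funext i
    have := Finset.ext_iff.mp he i
    simp at this
    cases hb : t₁ i <;> cases hb2 : t₂ i <;> simp_all
  · intro s hs
    simp only [Finset.mem_powersetCard] at hs
    refine ⟨fun i => i ∈ s, ?_, ?_⟩
    · simp only [Finset.mem_filter, Finset.mem_univ, true_and]
      rw [h]
      simpa using hs.2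
    · ext i; simp

/-- Distribution of the portfolio loss `L = L₁ + ⋯ + L_N` in the Dandelion model:
for every `l ∈ {0,…,N}`, the total probability of the configurations
`(l₀,…,l_N) ∈ {0,1}^{N+1}` with `l₁ + ⋯ + l_N = l` equals
`(1/Z) C(N,l) (exp(α l) + exp(α₀ + l(α+β)))`. -/
theorem dandelion_loss_distribution (N : ℕ) (hN : 1 ≤ N) (α α₀ β Z : ℝ)
    (hZ : Z ≠ 0) (l : ℕ) (hl : l ≤ N) :
    (∑ c ∈ Finset.univ.filter
        (fun c : Fin (N + 1) → Bool =>
          (∑ i : Fin N, (if c i.succ then 1 else 0 : ℕ)) = l),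
        (1 / Z) * Real.exp (α₀ * ind (c 0) + α * (∑ i : Fin N, ind (c i.succ))
          + β * ind (c 0) * (∑ i : Fin N, ind (c i.succ)))) =
      (1 / Z) * (N.choose l : ℝ) *
        (Real.exp (α * l) + Real.exp (α₀ + l * (α + β))) := by
  -- step 1: on the filter, rewrite the summand as a function of `c 0` only
  have key : ∀ c ∈ Finset.univ.filter
      (fun c : Fin (N + 1) → Bool =>
        (∑ i : Fin N, (if c i.succ then 1 else 0 : ℕ)) = l),
      (1 / Z) * Real.exp (α₀ * ind (c 0) + α * (∑ i : Fin N, ind (c i.succ))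
          + β * ind (c 0) * (∑ i : Fin N, ind (c i.succ)))
        = (1 / Z) * (if c 0 then Real.exp (α₀ + l * (α + β)) else Real.exp (α * l)) := by
    intro c hc
    simp only [Finset.mem_filter, Finset.mem_univ, true_and] at hc
    have hsum : (∑ i : Fin N, ind (c i.succ)) = (l : ℝ) := by
      rw [← hc]
      push_cast
      apply Finset.sum_congr rfl
      intro i _
      simp [ind]
    rw [hsum]
    cases h0 : c 0 <;>
    · simp only [ind, h0, Bool.false_eq_true, if_false, if_true]
      congr 2
      ring
  rw [Finset.sum_congr rfl key]
  -- step 2: split the sum according to the value of `c 0`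
  simp only [mul_ite]
  rw [Finset.sum_ite]
  rw [Finset.sum_const, Finset.sum_const]
  -- count each piece
  have hcard : ∀ b : Bool,
      ((Finset.univ.filter
        (fun c : Fin (N + 1) → Bool =>
          (∑ i : Fin N, (if c i.succ then 1 else 0 : ℕ)) = l)).filter
        (fun c => c 0 = b)).card = N.choose l := by
    intro b
    rw [← card_count N l]
    apply Finset.card_bij (fun c _ => fun i => c i.succ)
    · intro c hc
      simp only [Finset.mem_filter, Finset.mem_univ, true_and] at hc ⊢
      exact hc.1
    · intro c₁ h₁ c₂ h₂ he
      simp only [Finset.mem_filter, Finset.mem_univ, true_and] at h₁ h₂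
      funext i
      cases i using Fin.cases with
      | zero => rw [h₁.2, h₂.2]
      | succ j => exact congrFun he j
    · intro t ht
      simp only [Finset.mem_filter, Finset.mem_univ, true_and] at ht
      refine ⟨Fin.cons b t, ?_, ?_⟩
      · simp only [Finset.mem_filter, Finset.mem_univ, true_and, Fin.cons_succ, Fin.cons_zero]
        exact ⟨ht, trivial⟩
      · funext i; simp [Fin.cons_succ]
  have h1 := hcard true
  have h2 := hcard false
  simp only [Finset.filter_filter, Bool.not_eq_true] at *
  rw [h1, h2, nsmul_eq_mul, nsmul_eq_mul]
  ring
end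

section
/- Let N ≥ 2, 0 < p < 1, 0 < q < p with 1 - 2p + q > 0. Define α = log((p-q)/(1-2p+q)), α₀ = (N-1)·log((1-p)/p) + N·α, β = log(q/(p-q)) - α, and Z = (1+exp α)^N + exp(α₀)·(1+exp(α+β))^N. Then (1/Z) · exp(2α) · (1 + exp α)^{N-2} = (p-q)²/(1-p). -/
/-!
With `A = 1 - 2p + q` one has `e^α = (p-q)/A`, `1 + e^α = (1-p)/A` and
`e^α (1 + e^{α+β}) = p/A`, so the two terms of `Z` add up to
`(1-p)^{N-1}((1-p) + p)/A^N = (1-p)^{N-1}/A^N`; dividing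
`e^{2α}(1+e^α)^{N-2} = (p-q)²(1-p)^{N-2}/A^N` by it leaves `(p-q)²/(1-p)`.
-/

open Real

namespace Dandelion

variable {p q : ℝ}

lemma one_add_sub_div_eq (hA : 1 - 2 * p + q ≠ 0) :
    1 + (p - q) / (1 - 2 * p + q) = (1 - p) / (1 - 2 * p + q) := by
  rw [one_add_div hA]
  ring_nf

lemma sub_div_mul_one_add_div_sub_eq (hpq : p - q ≠ 0) :
    (p - q) / (1 - 2 * p + q) * (1 + q / (p - q)) = p / (1 - 2 * p + q) := by
  rw [one_add_div hpq, sub_add_cancel, mul_comm, div_mul_div_cancel₀ hpq]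

lemma partition_eq (M : ℕ) (hp : p ≠ 0) (hpq : p - q ≠ 0) (hA : 1 - 2 * p + q ≠ 0) :
    (1 + (p - q) / (1 - 2 * p + q)) ^ (M + 2) +
        ((1 - p) / p) ^ (M + 1) * ((p - q) / (1 - 2 * p + q)) ^ (M + 2) *
          (1 + q / (p - q)) ^ (M + 2) =
      (1 - p) ^ (M + 1) / (1 - 2 * p + q) ^ (M + 2) := by
  rw [mul_assoc, ← mul_pow, one_add_sub_div_eq hA, sub_div_mul_one_add_div_sub_eq hpq]
  -- as an atom, the denominator is matched against `hA` by `field_simp`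
  generalize 1 - 2 * p + q = A at hA ⊢
  simp only [div_pow]
  field_simp
  ring

end Dandelion

open Dandelion in
/-- In the Dandelion model with parameters `α = log((p-q)/(1-2p+q))`,
`α₀ = (N-1)log((1-p)/p) + Nα`, `β = log(q/(p-q)) - α` and
`Z = (1+e^α)^N + e^{α₀}(1+e^{α+β})^N`, the contribution of the `l₀ = 0`
configurations to the joint moment `E[L₁L₂]` of two non-central nodes is
`(1/Z) e^{2α} (1+e^α)^{N-2} = (p-q)²/(1-p)`. -/
theorem dandelion_l0_zero_contribution (N : ℕ) (hN : 2 ≤ N) (p q : ℝ)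
    (hp0 : 0 < p) (hp1 : p < 1) (hq0 : 0 < q) (hqp : q < p)
    (hpos : 1 - 2 * p + q > 0)
    (α α₀ β Z : ℝ)
    (hα : α = Real.log ((p - q) / (1 - 2 * p + q)))
    (hα₀ : α₀ = (N - 1 : ℝ) * Real.log ((1 - p) / p) + N * α)
    (hβ : β = Real.log (q / (p - q)) - α)
    (hZ : Z = (1 + Real.exp α) ^ N + Real.exp α₀ * (1 + Real.exp (α + β)) ^ N) :
    (1 / Z) * Real.exp (2 * α) * (1 + Real.exp α) ^ (N - 2) =
      (p - q) ^ 2 / (1 - p) := by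
  obtain ⟨M, rfl⟩ : ∃ M, N = M + 2 := ⟨N - 2, by omega⟩
  have hpq : 0 < p - q := sub_pos.2 hqp
  have hexp_α : exp α = (p - q) / (1 - 2 * p + q) := by
    rw [hα, exp_log (div_pos hpq hpos)]
  have hexp_αβ : exp (α + β) = q / (p - q) := by
    rw [hβ, add_sub_cancel, exp_log (div_pos hq0 hpq)]
  have hexp_α₀ : exp α₀ = ((1 - p) / p) ^ (M + 1) * exp α ^ (M + 2) := by
    have hcast : ((M + 2 : ℕ) : ℝ) - 1 = ((M + 1 : ℕ) : ℝ) := by push_cast; ring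
    rw [hα₀, hcast, exp_add, exp_nat_mul, exp_nat_mul,
      exp_log (div_pos (sub_pos.2 hp1) hp0)]
  have hexp_2α : exp (2 * α) = exp α ^ 2 := by
    rw [← exp_nat_mul]; norm_num
  rw [hZ, hexp_α₀, hexp_αβ, hexp_2α, hexp_α, partition_eq M hp0.ne' hpq.ne' hpos.ne',
    Nat.add_sub_cancel, one_add_sub_div_eq hpos.ne']
  have h1p : 1 - p ≠ 0 := (sub_pos.2 hp1).ne'
  generalize 1 - 2 * p + q = A at hpos ⊢
  simp only [div_pow]
  field_simp
  ring
end

section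
/- Let N ≥ 2, 0 < p < 1, 0 < q < p with 1 - 2p + q > 0. Define α = log((p-q)/(1-2p+q)), α₀ = (N-1)·log((1-p)/p) + N·α, β = log(q/(p-q)) - α, and Z = (1+exp α)^N + exp(α₀)·(1+exp(α+β))^N. Then (1/Z) · exp(α₀ + 2(α+β)) · (1 + exp(α+β))^{N-2} = q²/p. -/
/-!
Write `x = e^α`, `y = (1-p)/p` and `w = e^{α+β}`, so that `x = (p-q)/(1-2p+q)`, `w = q/(p-q)` and
`e^{α₀} = y^{N-1} x^N`. These satisfy `1 + x = y x (1 + w)`, so `(y x (1+w))^{N-1} = (1+x)^{N-1}`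
is a common factor of the weight `e^{α₀} w² (1+w)^{N-2}` and of `Z`; after cancelling it what
remains is a rational function of `p, q` that does not depend on `N`, and it equals `q²/p`.
-/

theorem dandelion_weight_ratio {K : Type*} [Field K] {x y w : K}
    (hrel : 1 + x = y * x * (1 + w)) (hx : 1 + x ≠ 0) (hw : 1 + w ≠ 0) (n : ℕ) :
    y ^ (n + 1) * x ^ (n + 2) * w ^ 2 * (1 + w) ^ n /
        ((1 + x) ^ (n + 2) + y ^ (n + 1) * x ^ (n + 2) * (1 + w) ^ (n + 2)) =
      x * w ^ 2 / ((1 + w) * (1 + x + x * (1 + w))) := by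
  have key : y ^ (n + 1) * x ^ (n + 1) * (1 + w) ^ (n + 1) = (1 + x) ^ (n + 1) := by
    rw [← mul_pow, ← mul_pow, hrel]
  calc _ = (1 + x) ^ (n + 1) * (x * w ^ 2 / (1 + w)) /
        ((1 + x) ^ (n + 1) * (1 + x + x * (1 + w))) := by
        congr 1
        · rw [← key]; field_simp; ring
        · rw [pow_succ (1 + x) (n + 1), ← key]; ring
    _ = _ := by rw [mul_div_mul_left _ _ (pow_ne_zero _ hx), div_div]

section DandelionParameters

variable {p q r : ℝ}

theorem dandelion_relation (hp : p ≠ 0) (hpq : p - q ≠ 0) (hr0 : r ≠ 0)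
    (hr : r = 1 - 2 * p + q) :
    1 + (p - q) / r = (1 - p) / p * ((p - q) / r) * (1 + q / (p - q)) := by
  field_simp
  rw [hr]
  ring

theorem dandelion_ratio_eq (hp : p ≠ 0) (hpq : p - q ≠ 0) (hr0 : r ≠ 0)
    (hr : r = 1 - 2 * p + q) :
    (p - q) / r * (q / (p - q)) ^ 2 /
        ((1 + q / (p - q)) * (1 + (p - q) / r + (p - q) / r * (1 + q / (p - q)))) =
      q ^ 2 / p := by
  have h1w : 1 + q / (p - q) = p / (p - q) := by field_simp; ring
  have hsum : 1 + (p - q) / r + (p - q) / r * (1 + q / (p - q)) = 1 / r := by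
    field_simp
    rw [hr]
    ring
  rw [hsum, h1w]
  field_simp

end DandelionParameters

theorem dandelion_l0_one_contribution_general (N : ℕ) (hN : 2 ≤ N) (p q : ℝ)
    (hp0 : 0 < p) (hq0 : 0 < q) (hqp : q < p)
    (hpos : 1 - 2 * p + q > 0)
    (α α₀ β Z : ℝ)
    (hα : α = Real.log ((p - q) / (1 - 2 * p + q)))
    (hα₀ : α₀ = (N - 1 : ℝ) * Real.log ((1 - p) / p) + N * α)
    (hβ : β = Real.log (q / (p - q)) - α)
    (hZ : Z = (1 + Real.exp α) ^ N + Real.exp α₀ * (1 + Real.exp (α + β)) ^ N) :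
    (1 / Z) * Real.exp (α₀ + 2 * (α + β)) * (1 + Real.exp (α + β)) ^ (N - 2) =
      q ^ 2 / p := by
  obtain ⟨n, rfl⟩ : ∃ n, N = n + 2 := ⟨N - 2, by omega⟩
  have hpq : 0 < p - q := sub_pos.mpr hqp
  have h1p : 0 < 1 - p := by linarith
  have hx : Real.exp α = (p - q) / (1 - 2 * p + q) := by
    rw [hα, Real.exp_log (by positivity)]
  have hw : Real.exp (α + β) = q / (p - q) := by
    rw [hβ, add_sub_cancel, Real.exp_log (by positivity)]
  have hy : Real.exp α₀ = ((1 - p) / p) ^ (n + 1) * ((p - q) / (1 - 2 * p + q)) ^ (n + 2) := by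
    have hcast : ((n + 2 : ℕ) - 1 : ℝ) = (n + 1 : ℕ) := by push_cast; ring
    rw [hα₀, hcast, Real.exp_add, Real.exp_nat_mul, Real.exp_nat_mul,
      Real.exp_log (by positivity), hx]
  have hexp : Real.exp (α₀ + 2 * (α + β)) = Real.exp α₀ * Real.exp (α + β) ^ 2 := by
    rw [Real.exp_add, ← Real.exp_nat_mul]; norm_num
  rw [hZ, hexp, hy, hx, hw, Nat.add_sub_cancel, ← dandelion_ratio_eq hp0.ne' hpq.ne' hpos.ne' rfl,
    ← dandelion_weight_ratio (dandelion_relation hp0.ne' hpq.ne' hpos.ne' rfl) (by positivity)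
      (by positivity)]
  ring

/-- In the Dandelion model with parameters `α = log((p-q)/(1-2p+q))`,
`α₀ = (N-1)log((1-p)/p) + Nα`, `β = log(q/(p-q)) - α` and
`Z = (1+e^α)^N + e^{α₀}(1+e^{α+β})^N`, the contribution of the `l₀ = 1`
configurations to the joint moment `E[L₁L₂]` of two non-central nodes is
`(1/Z) e^{α₀+2(α+β)} (1+e^{α+β})^{N-2} = q²/p`. -/
theorem dandelion_l0_one_contribution (N : ℕ) (hN : 2 ≤ N) (p q : ℝ)
    (hp0 : 0 < p) (hp1 : p < 1) (hq0 : 0 < q) (hqp : q < p)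
    (hpos : 1 - 2 * p + q > 0)
    (α α₀ β Z : ℝ)
    (hα : α = Real.log ((p - q) / (1 - 2 * p + q)))
    (hα₀ : α₀ = (N - 1 : ℝ) * Real.log ((1 - p) / p) + N * α)
    (hβ : β = Real.log (q / (p - q)) - α)
    (hZ : Z = (1 + Real.exp α) ^ N + Real.exp α₀ * (1 + Real.exp (α + β)) ^ N) :
    (1 / Z) * Real.exp (α₀ + 2 * (α + β)) * (1 + Real.exp (α + β)) ^ (N - 2) =
      q ^ 2 / p :=
  dandelion_l0_one_contribution_general N hN p q hp0 hq0 hqp hpos α α₀ β Z hα hα₀ hβ hZ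
end

section
/- Let N ≥ 2, 0 < p < 1, 0 < q < p with 1 - 2p + q > 0, and let P be the Dandelion probability function on {0,1}^{N+1} with parameters α = log((p-q)/(1-2p+q)), α₀ = (N-1)·log((1-p)/p) + N·α, β = log(q/(p-q)) - α, Z = (1+exp α)^N + exp(α₀)·(1+exp(α+β))^N. Then for any two distinct non-central indices i, j ∈ {1,…,N}, the joint moment E[LᵢLⱼ] = Σ_{(l₀,…,l_N): lᵢ=1, lⱼ=1} P(l₀,…,l_N) equals (p-q)²/(1-p) + q²/p. -/
open Finset Real

lemma sum_filter_and_eq_sum_ind_mul_ind {ι : Type*} [Fintype ι] (P Q : ι → Bool) (g : ι → ℝ) :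
    ∑ x ∈ univ.filter (fun x => P x = true ∧ Q x = true), g x
      = ∑ x, ind (P x) * ind (Q x) * g x := by
  rw [sum_filter]
  refine sum_congr rfl fun x _ => ?_
  cases P x <;> cases Q x <;> simp [ind]

lemma sum_ind_mul_ind_mul_exp_mul_sum_ind {ι : Type*} [Fintype ι] [DecidableEq ι] {i j : ι}
    (hij : i ≠ j) (a : ℝ) :
    ∑ f : ι → Bool, ind (f i) * ind (f j) * exp (a * ∑ k, ind (f k))
      = exp a ^ 2 * (1 + exp a) ^ (Fintype.card ι - 2) := by
  set S : Finset ι := {i, j}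
  have h_factor : ∀ f : ι → Bool, ind (f i) * ind (f j) * exp (a * ∑ k, ind (f k))
      = ∏ k, (if k ∈ S then ind (f k) else 1) * exp (a * ind (f k)) := fun f => by
    rw [prod_mul_distrib, prod_ite_mem, univ_inter, prod_pair hij, mul_sum, exp_sum]
  have h_leaf : ∀ k, ∑ b : Bool, (if k ∈ S then ind b else 1) * exp (a * ind b)
      = if k ∈ S then exp a else 1 + exp a := fun k => by
    by_cases hk : k ∈ S <;> simp [hk, ind, add_comm]
  have h_card : #(univ.filter (· ∉ S)) = Fintype.card ι - 2 := by
    rw [filter_not, filter_mem_eq_inter, univ_inter, card_sdiff_of_subset (subset_univ _),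
      card_univ, card_pair hij]
  simp_rw [h_factor]
  rw [← Fintype.prod_sum fun k (b : Bool) => (if k ∈ S then ind b else 1) * exp (a * ind b),
    Fintype.prod_congr _ _ h_leaf, prod_ite, prod_const, prod_const,
    filter_mem_eq_inter, univ_inter, card_pair hij, h_card]

lemma sum_pi_fin_succ_eq_sum_cons {n : ℕ} {α M : Type*} [Fintype α] [AddCommMonoid M]
    (g : (Fin (n + 1) → α) → M) :
    ∑ l, g l = ∑ a : α, ∑ f : Fin n → α, g (Fin.cons a f) := by
  rw [← Fintype.sum_prod_type']
  exact Fintype.sum_equiv (Fin.consEquiv fun _ => α).symm _ _ fun l => by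
    simp [Fin.consEquiv]

lemma dandelion_unnormalized_joint_moment {N : ℕ} (α₀ α β : ℝ) {i j : Fin N} (hij : i ≠ j) :
    ∑ l ∈ univ.filter (fun l : Fin (N + 1) → Bool => l i.succ = true ∧ l j.succ = true),
        exp (α₀ * ind (l 0) + α * (∑ k : Fin N, ind (l k.succ))
          + β * ind (l 0) * (∑ k : Fin N, ind (l k.succ)))
      = exp α ^ 2 * (1 + exp α) ^ (N - 2)
        + exp α₀ * (exp (α + β) ^ 2 * (1 + exp (α + β)) ^ (N - 2)) := by
  have h_weight : ∀ (b : Bool) (f : Fin N → Bool),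
      exp (α₀ * ind b + α * ∑ k, ind (f k) + β * ind b * ∑ k, ind (f k))
        = exp (α₀ * ind b) * exp ((α + β * ind b) * ∑ k, ind (f k)) := fun b f => by
    rw [← exp_add]; congr 1; ring
  rw [sum_filter_and_eq_sum_ind_mul_ind, sum_pi_fin_succ_eq_sum_cons, Fintype.sum_bool]
  simp only [Fin.cons_zero, Fin.cons_succ, h_weight, mul_left_comm _ (exp (α₀ * _)),
    ← mul_sum, sum_ind_mul_ind_mul_exp_mul_sum_ind hij, Fintype.card_fin]
  simp [ind, add_comm]

theorem dandelion_noncentral_joint_moment_general (N : ℕ) (p q : ℝ)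
    (hq0 : 0 < q) (hqp : q < p)
    (hpos : 1 - 2 * p + q > 0)
    (α α₀ β Z : ℝ)
    (hα : α = Real.log ((p - q) / (1 - 2 * p + q)))
    (hα₀ : α₀ = (N - 1 : ℝ) * Real.log ((1 - p) / p) + N * α)
    (hβ : β = Real.log (q / (p - q)) - α)
    (hZ : Z = (1 + Real.exp α) ^ N + Real.exp α₀ * (1 + Real.exp (α + β)) ^ N)
    (i j : Fin N) (hij : i ≠ j) :
    (∑ l ∈ Finset.univ.filter
        (fun l : Fin (N + 1) → Bool => l i.succ = true ∧ l j.succ = true),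
        (1 / Z) * Real.exp (α₀ * ind (l 0) + α * (∑ k : Fin N, ind (l k.succ))
          + β * ind (l 0) * (∑ k : Fin N, ind (l k.succ)))) =
      (p - q) ^ 2 / (1 - p) + q ^ 2 / p := by
  have hpq : 0 < p - q := by linarith
  have hp : 0 < p := by linarith
  have h1p : 0 < 1 - p := by linarith
  generalize hr : 1 - 2 * p + q = r at hpos hα
  obtain ⟨M, rfl⟩ : ∃ M, N = M + 2 := ⟨N - 2, by have := Fin.val_ne_of_ne hij; omega⟩
  have h_exp_α : exp α = (p - q) / r := by rw [hα, exp_log (by positivity)]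
  have h_exp_αβ : exp (α + β) = q / (p - q) := by
    rw [hβ, add_sub_cancel, exp_log (by positivity)]
  have h_exp_α₀ : exp α₀ = ((1 - p) / p) ^ (M + 1) * exp α ^ (M + 2) := by
    rw [hα₀, show ((M + 2 : ℕ) : ℝ) - 1 = (M + 1 : ℕ) by push_cast; ring, exp_add,
      exp_nat_mul, exp_nat_mul, exp_log (by positivity)]
  have h_one_add_exp_α : 1 + exp α = (1 - p) / r := by
    rw [h_exp_α]; field_simp; linarith
  have h_one_add_exp_αβ : 1 + exp (α + β) = p / (p - q) := by
    rw [h_exp_αβ]; field_simp; ring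
  have h_partition : Z = (1 - p) ^ (M + 1) / r ^ (M + 2) := by
    rw [hZ, h_exp_α₀, h_one_add_exp_α, h_one_add_exp_αβ, h_exp_α]
    simp only [div_pow]
    field_simp
    ring
  rw [← mul_sum, dandelion_unnormalized_joint_moment α₀ α β hij, h_partition, h_exp_α₀,
    h_one_add_exp_α, h_one_add_exp_αβ, h_exp_αβ, h_exp_α, Nat.add_sub_cancel]
  simp only [div_pow]
  field_simp
  ring

/-- In the Dandelion model with parameters `α = log((p-q)/(1-2p+q))`,
`α₀ = (N-1)log((1-p)/p) + Nα`, `β = log(q/(p-q)) - α` and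
`Z = (1+e^α)^N + e^{α₀}(1+e^{α+β})^N`, for any two distinct non-central indices
`i, j` the joint moment `E[LᵢLⱼ] = Σ_{lᵢ=1, lⱼ=1} P(l₀,…,l_N)` equals
`(p-q)²/(1-p) + q²/p`. -/
theorem dandelion_noncentral_joint_moment (N : ℕ) (hN : 2 ≤ N) (p q : ℝ)
    (hp0 : 0 < p) (hp1 : p < 1) (hq0 : 0 < q) (hqp : q < p)
    (hpos : 1 - 2 * p + q > 0)
    (α α₀ β Z : ℝ)
    (hα : α = Real.log ((p - q) / (1 - 2 * p + q)))
    (hα₀ : α₀ = (N - 1 : ℝ) * Real.log ((1 - p) / p) + N * α)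
    (hβ : β = Real.log (q / (p - q)) - α)
    (hZ : Z = (1 + Real.exp α) ^ N + Real.exp α₀ * (1 + Real.exp (α + β)) ^ N)
    (i j : Fin N) (hij : i ≠ j) :
    (∑ l ∈ Finset.univ.filter
        (fun l : Fin (N + 1) → Bool => l i.succ = true ∧ l j.succ = true),
        (1 / Z) * Real.exp (α₀ * ind (l 0) + α * (∑ k : Fin N, ind (l k.succ))
          + β * ind (l 0) * (∑ k : Fin N, ind (l k.succ)))) =
      (p - q) ^ 2 / (1 - p) + q ^ 2 / p :=
  dandelion_noncentral_joint_moment_general N p q hq0 hqp hpos α α₀ β Z hα hα₀ hβ hZ i j hij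
end

section
/- Let N ≥ 1, 0 < p < 1, and take q = p² (so the central–non-central correlation ρ = (q-p²)/(p(1-p)) is zero); note 1 - 2p + p² = (1-p)² > 0, so the Dandelion parameters α = log((p-q)/(1-2p+q)), α₀ = (N-1)·log((1-p)/p) + N·α, β = log(q/(p-q)) - α, Z = (1+exp α)^N + exp(α₀)·(1+exp(α+β))^N are well defined. Then for every l ∈ {0,1,…,N}, the loss probability (1/Z) · C(N,l) · (exp(α l) + exp(α₀ + l(α+β))) equals the binomial probability C(N,l) · p^l · (1-p)^{N-l}. -/
/-! With `q = p²` every Dandelion parameter collapses onto the log-odds `log r`, `r = p / (1 - p)`: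
`exp α = exp (α + β) = exp α₀ = r`. The central node then decouples: the weight of `l` losses is
`(1 + r) r^l`, `Z = (1 + r)^(N+1)`, and `r^l / (1 + r)^N = p^l (1 - p)^(N-l)`
because `1 + r = (1 - p)⁻¹`. -/

open Real

lemma one_add_odds {p : ℝ} (hp : 1 - p ≠ 0) : 1 + p / (1 - p) = (1 - p)⁻¹ := by
  field_simp
  ring

lemma sub_sq_div_one_sub_sq {p : ℝ} (hp : 1 - p ≠ 0) :
    (p - p ^ 2) / (1 - 2 * p + p ^ 2) = p / (1 - p) := by
  rw [show (1 : ℝ) - 2 * p + p ^ 2 = (1 - p) ^ 2 by ring, show p - p ^ 2 = p * (1 - p) by ring]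
  field_simp

lemma sq_div_sub_sq {p : ℝ} (hp : p ≠ 0) : p ^ 2 / (p - p ^ 2) = p / (1 - p) := by
  rw [show p - p ^ 2 = p * (1 - p) by ring, sq, mul_div_mul_left _ _ hp]

lemma odds_pow_mul_pow {p : ℝ} (hp : 1 - p ≠ 0) {l N : ℕ} (hl : l ≤ N) :
    (p / (1 - p)) ^ l * (1 - p) ^ N = p ^ l * (1 - p) ^ (N - l) := by
  rw [div_pow, pow_sub₀ _ hp hl]
  ring

lemma dandelion_weight_of_exp_eq {α α₀ β r : ℝ} (hα : exp α = r) (hα₀ : exp α₀ = r)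
    (hαβ : exp (α + β) = r) (l : ℕ) :
    exp (α * l) + exp (α₀ + l * (α + β)) = (1 + r) * r ^ l := by
  rw [mul_comm, exp_nat_mul, exp_add, exp_nat_mul, hα, hα₀, hαβ]
  ring

theorem dandelion_zero_correlation_binomial_general (N : ℕ) (p q : ℝ)
    (hp0 : 0 < p) (hp1 : p < 1) (hq : q = p ^ 2)
    (α α₀ β Z : ℝ)
    (hα : α = Real.log ((p - q) / (1 - 2 * p + q)))
    (hα₀ : α₀ = (N - 1 : ℝ) * Real.log ((1 - p) / p) + N * α)
    (hβ : β = Real.log (q / (p - q)) - α)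
    (hZ : Z = (1 + Real.exp α) ^ N + Real.exp α₀ * (1 + Real.exp (α + β)) ^ N)
    (l : ℕ) (hl : l ≤ N) :
    (1 / Z) * (N.choose l : ℝ) *
        (Real.exp (α * l) + Real.exp (α₀ + l * (α + β))) =
      (N.choose l : ℝ) * p ^ l * (1 - p) ^ (N - l) := by
  have hp : 1 - p ≠ 0 := by linarith
  obtain ⟨r, hr_def⟩ : ∃ r, p / (1 - p) = r := ⟨_, rfl⟩
  have hr : 0 < r := hr_def ▸ div_pos hp0 (by linarith)
  have h1r : 1 - p = (1 + r)⁻¹ := by rw [← hr_def, one_add_odds hp, inv_inv]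
  have hα_log : α = log r := by rw [hα, hq, sub_sq_div_one_sub_sq hp, hr_def]
  have heα : exp α = r := by rw [hα_log, exp_log hr]
  have heαβ : exp (α + β) = r := by
    rw [hβ, add_sub_cancel, hq, sq_div_sub_sq hp0.ne', hr_def, exp_log hr]
  have heα₀ : exp α₀ = r := by
    rw [hα₀, ← inv_div, log_inv, hr_def, ← hα_log,
      show (N - 1 : ℝ) * -α + N * α = α by ring, heα]
  have h1r_ne : 1 + r ≠ 0 := by positivity
  rw [dandelion_weight_of_exp_eq heα heα₀ heαβ, hZ, heα, heα₀, heαβ, mul_assoc _ (p ^ l),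
    ← odds_pow_mul_pow hp hl, hr_def, h1r, inv_pow]
  field_simp

/-- In the Dandelion model with `q = p²` (zero central–non-central correlation),
the loss distribution `(1/Z) C(N,l)(exp(α l) + exp(α₀ + l(α+β)))` is exactly the
binomial distribution with parameters `N` and `p`. -/
theorem dandelion_zero_correlation_binomial (N : ℕ) (hN : 1 ≤ N) (p q : ℝ)
    (hp0 : 0 < p) (hp1 : p < 1) (hq : q = p ^ 2)
    (α α₀ β Z : ℝ)
    (hα : α = Real.log ((p - q) / (1 - 2 * p + q)))
    (hα₀ : α₀ = (N - 1 : ℝ) * Real.log ((1 - p) / p) + N * α)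
    (hβ : β = Real.log (q / (p - q)) - α)
    (hZ : Z = (1 + Real.exp α) ^ N + Real.exp α₀ * (1 + Real.exp (α + β)) ^ N)
    (l : ℕ) (hl : l ≤ N) :
    (1 / Z) * (N.choose l : ℝ) *
        (Real.exp (α * l) + Real.exp (α₀ + l * (α + β))) =
      (N.choose l : ℝ) * p ^ l * (1 - p) ^ (N - l) :=
  dandelion_zero_correlation_binomial_general N p q hp0 hp1 hq α α₀ β Z hα hα₀ hβ hZ l hl
end
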